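/- arXiv:1210.0223 — 4 statements merged into one kernel-verified Lean document; each statement's English description precedes it below -/
import Mathlib

section
/- Let W be a Weyl group acting on the real span of its root system, w₀ the longest element, and Π ⊆ Δ a subset of simple roots such that w = w₀w_Π is an involution that fixes every root in Π. Then rk(1 − w₀) = rk(1 − w_Π) + rk(1 − w), where rk(1 − x) is the rank of the linear operator 1 − x in the geometric representation. -/
open CoxeterSystem

noncomputable def geomForm {B : Type*} (M : CoxeterMatrix B) (i j : B) : ℝ :=
  if M i j = 0 then -1 else -Real.cos (Real.pi / (M i j : ℝ))

noncomputable def geomRefl {B : Type*} [Fintype B] [DecidableEq B] (M : CoxeterMatrix B) (i : B) :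
    Module.End ℝ (B → ℝ) :=
  LinearMap.id -
    LinearMap.smulRight
      ((2 : ℝ) • ∑ j, geomForm M i j • (LinearMap.proj j : (B → ℝ) →ₗ[ℝ] ℝ))
      (Pi.single i 1)

def IsGeometricRep {B : Type*} [Fintype B] [DecidableEq B] {M : CoxeterMatrix B} {W : Type*}
    [Group W] (cs : CoxeterSystem M W) (ρ : W →* Module.End ℝ (B → ℝ)) : Prop :=
  ∀ i, ρ (cs.simple i) = geomRefl M i

noncomputable def rkOneSub {B : Type*} [Fintype B] (f : Module.End ℝ (B → ℝ)) : ℕ :=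
  Module.finrank ℝ (LinearMap.range (1 - f))

/-- Bruhat order on a Coxeter group: `u ≤ v` iff there is a chain from `u` to `v`, each step
multiplying on the right by a reflection and strictly increasing the length. -/
def BruhatLE {B W : Type*} [Group W] {M : CoxeterMatrix B} (cs : CoxeterSystem M W)
    (u v : W) : Prop :=
  Relation.ReflTransGen
    (fun x y => ∃ t, cs.IsReflection t ∧ y = x * t ∧ cs.length x < cs.length y) u v

/-- `w` is the longest element of the standard parabolic subgroup generated by
the simple reflections indexed by `S`. -/
def IsLongestOfParabolic {B W : Type*} [Group W] {M : CoxeterMatrix B} (cs : CoxeterSystem M W)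
    (S : Set B) (w : W) : Prop :=
  w ∈ Subgroup.closure (cs.simple '' S) ∧
    ∀ u ∈ Subgroup.closure (cs.simple '' S), cs.length u ≤ cs.length w

/-- `w` is the longest element of `W`. -/
def IsLongestElement {B W : Type*} [Group W] {M : CoxeterMatrix B} (cs : CoxeterSystem M W)
    (w : W) : Prop :=
  ∀ u : W, cs.length u ≤ cs.length w

/-- Key linear algebra lemma: if `b` is an involution, `range (1 - a') ≤ U`,
`b` fixes `U` pointwise, and `a'` has finite order, then
`rk (1 - b*a') = rk (1 - a') + rk (1 - b)`. -/
theorem rank_one_sub_mul_aux {V : Type*} [AddCommGroup V] [Module ℝ V]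
    [FiniteDimensional ℝ V] (b a' : Module.End ℝ V) (U : Submodule ℝ V)
    (hb2 : b * b = 1)
    (hNU : LinearMap.range (1 - a') ≤ U)
    (hbU : ∀ x ∈ U, b x = x)
    (hfin : ∃ m > 0, a' ^ m = 1) :
    Module.finrank ℝ (LinearMap.range (1 - b * a')) =
      Module.finrank ℝ (LinearMap.range (1 - a')) +
        Module.finrank ℝ (LinearMap.range (1 - b)) := by
  set q : Module.End ℝ V := 1 - b with hq
  set N : Module.End ℝ V := 1 - a' with hN
  -- b ∘ N = N
  have hbN : b * N = N := by
    ext v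
    exact hbU (N v) (hNU (LinearMap.mem_range_self N v))
  -- 1 - b * a' = q + N
  have hc : 1 - b * a' = q + N := by
    have : q + b * N = 1 - b * a' := by rw [hq, hN, mul_sub, mul_one]; abel
    rw [← this, hbN]
  -- U ≤ ker q
  have hUkq : U ≤ LinearMap.ker q := by
    intro x hx
    simp only [hq, LinearMap.mem_ker, LinearMap.sub_apply, Module.End.one_apply,
      sub_eq_zero]
    exact (hbU x hx).symm
  -- range q ⊓ U = 0  (elements of U in range q are zero)
  have hqU0 : ∀ x ∈ U, x ∈ LinearMap.range q → x = 0 := by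
    rintro x hxU ⟨y, rfl⟩
    have h1 : b (q y) = - q y := by
      have hb := congrArg (fun f : Module.End ℝ V => f y) hb2
      simp only [Module.End.mul_apply, Module.End.one_apply] at hb
      simp only [hq, LinearMap.sub_apply, Module.End.one_apply, map_sub, hb]
      abel
    have h2 : b (q y) = q y := hbU _ hxU
    have : (2 : ℝ) • q y = 0 := by
      rw [two_smul]
      nth_rewrite 1 [← h2]
      rw [h1]; abel
    have h2ne : (2 : ℝ) ≠ 0 := two_ne_zero
    exact (smul_eq_zero.mp this).resolve_left h2ne
  -- ker (q + N) = ker q ⊓ ker N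
  have hker : LinearMap.ker (q + N) = LinearMap.ker q ⊓ LinearMap.ker N := by
    apply le_antisymm
    · intro v hv
      simp only [LinearMap.mem_ker, LinearMap.add_apply] at hv
      have hqv : q v = - N v := by linear_combination (norm := abel) hv
      have hmem : q v ∈ U := hqv ▸ (neg_mem (hNU (LinearMap.mem_range_self N v)))
      have hq0 : q v = 0 := hqU0 _ hmem (LinearMap.mem_range_self q v)
      have hN0 : N v = 0 := by rw [hq0] at hqv; simpa using hqv.symm
      exact ⟨hq0, hN0⟩
    · rintro v ⟨h1, h2⟩
      simp only [LinearMap.mem_ker, LinearMap.add_apply] at *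
      rw [h1, h2, add_zero]
  -- ker q ⊔ ker N = ⊤ via averaging
  have hsup : LinearMap.ker q ⊔ LinearMap.ker N = ⊤ := by
    obtain ⟨m, hm, hm1⟩ := hfin
    rw [eq_top_iff]
    intro v _
    set S : Module.End ℝ V := ∑ k ∈ Finset.range m, a' ^ k with hS
    have hNS : N * S = 0 := by
      rw [hN, ← neg_sub a' 1, neg_mul, mul_geom_sum, hm1, sub_self, neg_zero]
    have hSv : S v ∈ LinearMap.ker N := by
      rw [LinearMap.mem_ker]
      have := congrArg (fun f : Module.End ℝ V => f v) hNS
      simpa using this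
    have hUk : ∀ k, v - (a' ^ k) v ∈ U := by
      intro k
      have hgeo : N * (∑ j ∈ Finset.range k, a' ^ j) = 1 - a' ^ k := by
        rw [hN, ← neg_sub a' 1, neg_mul, mul_geom_sum, neg_sub]
      have : v - (a' ^ k) v = N ((∑ j ∈ Finset.range k, a' ^ j) v) := by
        have := congrArg (fun f : Module.End ℝ V => f v) hgeo
        simp only [Module.End.mul_apply, LinearMap.sub_apply, Module.End.one_apply] at this
        rw [this]
      rw [this]
      exact hNU (LinearMap.mem_range_self N _)
    have hmv : (m : ℝ) • v - S v ∈ U := by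
      have : (m : ℝ) • v - S v = ∑ k ∈ Finset.range m, (v - (a' ^ k) v) := by
        rw [Finset.sum_sub_distrib, Finset.sum_const, Finset.card_range]
        simp [hS, LinearMap.sum_apply, Nat.cast_smul_eq_nsmul ℝ]
      rw [this]
      exact Submodule.sum_mem U fun k _ => hUk k
    have hmne : (m : ℝ) ≠ 0 := Nat.cast_ne_zero.mpr hm.ne'
    have hv : v = (m : ℝ)⁻¹ • ((m : ℝ) • v - S v) + (m : ℝ)⁻¹ • S v := by
      rw [smul_sub, smul_smul, inv_mul_cancel₀ hmne, one_smul]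
      abel
    rw [hv]
    exact Submodule.add_mem _
      (Submodule.mem_sup_left (hUkq (Submodule.smul_mem U _ hmv)))
      (Submodule.mem_sup_right (Submodule.smul_mem _ _ hSv))
  -- dimension count
  rw [hc]
  have e1 := LinearMap.finrank_range_add_finrank_ker (q + N)
  have e2 := LinearMap.finrank_range_add_finrank_ker q
  have e3 := LinearMap.finrank_range_add_finrank_ker N
  have e4 := Submodule.finrank_sup_add_finrank_inf_eq (LinearMap.ker q) (LinearMap.ker N)
  rw [hsup, finrank_top] at e4
  rw [hker] at e1
  omega

/-- If `w = w₀ w_Π` is an involution fixing every simple root in `Π`, then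
`rk(1 - w₀) = rk(1 - w_Π) + rk(1 - w)` in the geometric representation. -/
theorem stmt3 {B W : Type*} [Fintype B] [DecidableEq B] [Group W] [Finite W]
    {M : CoxeterMatrix B} (cs : CoxeterSystem M W)
    (hweyl : ∀ i j, i ≠ j → M i j ∈ ({2, 3, 4, 6} : Set ℕ))
    (ρ : W →* Module.End ℝ (B → ℝ)) (hρ : IsGeometricRep cs ρ)
    (w0 : W) (hw0 : IsLongestElement cs w0)
    (P : Set B) (wP : W) (hwP : IsLongestOfParabolic cs P wP)
    (hinv : (w0 * wP) * (w0 * wP) = 1)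
    (hfix : ∀ i ∈ P, ρ (w0 * wP) (Pi.single i 1) = Pi.single i 1) :
    rkOneSub (ρ w0) = rkOneSub (ρ wP) + rkOneSub (ρ (w0 * wP)) := by
  classical
  set U : Submodule ℝ (B → ℝ) :=
    Submodule.span ℝ ((fun i => Pi.single i (1 : ℝ)) '' P) with hU
  have hsimple : ∀ i ∈ P, LinearMap.range (1 - ρ (cs.simple i)) ≤ U := by
    intro i hi
    rw [hρ i]
    rintro x ⟨v, rfl⟩
    have hx : (1 - geomRefl M i) v =
        (((2 : ℝ) • ∑ j, geomForm M i j • (LinearMap.proj j : (B → ℝ) →ₗ[ℝ] ℝ)) v) •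
          (Pi.single i 1 : B → ℝ) := by
      simp [geomRefl, LinearMap.sub_apply, LinearMap.smulRight_apply, sub_sub_cancel]
    rw [hx]
    exact Submodule.smul_mem _ _ (Submodule.subset_span ⟨i, hi, rfl⟩)
  have hrange : ∀ g ∈ Subgroup.closure (cs.simple '' P),
      LinearMap.range (1 - ρ g) ≤ U := by
    intro g hg
    induction hg using Subgroup.closure_induction with
    | mem x hx => obtain ⟨i, hi, rfl⟩ := hx; exact hsimple i hi
    | one => simp
    | mul x y hx hy ihx ihy =>
        rintro z ⟨v, rfl⟩
        have hz : (1 - ρ (x * y)) v = (1 - ρ x) ((ρ y) v) + (1 - ρ y) v := by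
          simp only [map_mul, LinearMap.sub_apply, Module.End.one_apply, Module.End.mul_apply]
          abel
        rw [hz]
        exact add_mem (ihx ⟨(ρ y) v, rfl⟩) (ihy ⟨v, rfl⟩)
    | inv x hx ih =>
        rintro z ⟨v, rfl⟩
        have hcan : (ρ x) ((ρ x⁻¹) v) = v := by
          rw [← Module.End.mul_apply, ← map_mul, mul_inv_cancel, map_one, Module.End.one_apply]
        have hz : (1 - ρ x⁻¹) v = -((1 - ρ x) ((ρ x⁻¹) v)) := by
          simp only [LinearMap.sub_apply, Module.End.one_apply, hcan, neg_sub]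
        rw [hz]
        exact neg_mem (ih ⟨_, rfl⟩)
  have hinvrange : ∀ g : W, LinearMap.range (1 - ρ g⁻¹) ≤ LinearMap.range (1 - ρ g) := by
    intro g
    rintro z ⟨v, rfl⟩
    refine ⟨-((ρ g⁻¹) v), ?_⟩
    have hcan : (ρ g) ((ρ g⁻¹) v) = v := by
      rw [← Module.End.mul_apply, ← map_mul, mul_inv_cancel, map_one, Module.End.one_apply]
    simp only [LinearMap.sub_apply, Module.End.one_apply, map_neg, hcan]
    abel
  have hrangeEq : LinearMap.range (1 - ρ wP⁻¹) = LinearMap.range (1 - ρ wP) := by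
    refine le_antisymm (hinvrange wP) ?_
    have := hinvrange wP⁻¹
    rwa [inv_inv] at this
  set a' : Module.End ℝ (B → ℝ) := ρ wP⁻¹ with ha'
  set b : Module.End ℝ (B → ℝ) := ρ (w0 * wP) with hb
  have hba : ρ w0 = b * a' := by rw [hb, ha', ← map_mul, mul_inv_cancel_right]
  have hb2 : b * b = 1 := by rw [hb, ← map_mul, hinv, map_one]
  have hNU : LinearMap.range (1 - a') ≤ U := hrange _ (inv_mem hwP.1)
  have hbU : ∀ x ∈ U, b x = x := by
    intro x hx
    induction hx using Submodule.span_induction with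
    | mem x hx => obtain ⟨i, hi, rfl⟩ := hx; exact hfix i hi
    | zero => simp
    | add x y _ _ h1 h2 => rw [map_add, h1, h2]
    | smul c x _ h => rw [map_smul, h]
  have hfin : ∃ m > 0, a' ^ m = 1 :=
    ⟨orderOf wP⁻¹, orderOf_pos _, by rw [ha', ← map_pow, pow_orderOf_eq_one, map_one]⟩
  have key := rank_one_sub_mul_aux b a' U hb2 hNU hbU hfin
  unfold rkOneSub
  rw [hba, key, ha', hrangeEq]
end

section
/- Let W be a finite Coxeter group acting in its geometric representation on V, and let w, τ ∈ W with w ≤ τ in the Bruhat order. Then ℓ(w) + rk(1 − w) ≤ ℓ(τ) + rk(1 − τ). -/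
open CoxeterSystem

open Module
lemma geomRefl_rank_le {B : Type*} [Fintype B] [DecidableEq B] (M : CoxeterMatrix B) (i : B) :
    finrank ℝ (LinearMap.range (1 - geomRefl M i)) ≤ 1 := by
  have h : (1 : Module.End ℝ (B → ℝ)) - geomRefl M i =
      LinearMap.smulRight
        ((2 : ℝ) • ∑ j, geomForm M i j • (LinearMap.proj j : (B → ℝ) →ₗ[ℝ] ℝ))
        (Pi.single i 1) := by
    rw [geomRefl]; abel_nf
    rw [show (LinearMap.id : Module.End ℝ (B → ℝ)) = 1 from rfl]; abel
  rw [h]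
  have hle : LinearMap.range (LinearMap.smulRight
      ((2 : ℝ) • ∑ j, geomForm M i j • (LinearMap.proj j : (B → ℝ) →ₗ[ℝ] ℝ))
      (Pi.single i 1)) ≤ ℝ ∙ (Pi.single i 1 : B → ℝ) := by
    rintro x ⟨y, rfl⟩
    exact Submodule.smul_mem _ _ (Submodule.mem_span_singleton_self _)
  calc finrank ℝ _ ≤ finrank ℝ (ℝ ∙ (Pi.single i 1 : B → ℝ)) := Submodule.finrank_mono hle
    _ ≤ 1 := by simpa using finrank_span_le_card ({Pi.single i 1} : Set (B → ℝ))

lemma refl_rank_le {B W : Type*} [Fintype B] [DecidableEq B] [Group W]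
    {M : CoxeterMatrix B} (cs : CoxeterSystem M W)
    (ρ : W →* Module.End ℝ (B → ℝ)) (hρ : IsGeometricRep cs ρ)
    {t : W} (ht : cs.IsReflection t) :
    finrank ℝ (LinearMap.range (1 - ρ t)) ≤ 1 := by
  obtain ⟨u, i, rfl⟩ := ht
  have key : (1 : Module.End ℝ (B → ℝ)) - ρ (u * cs.simple i * u⁻¹) =
      ρ u * (1 - geomRefl M i) * ρ u⁻¹ := by
    rw [← hρ i]
    simp only [map_mul, mul_sub, sub_mul, one_mul, mul_one, ← map_mul, mul_inv_cancel, map_one]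
  rw [key]
  have h1 : ρ u * (1 - geomRefl M i) * ρ u⁻¹ =
      (ρ u).comp (((1 - geomRefl M i)).comp (ρ u⁻¹)) := rfl
  rw [h1, LinearMap.range_comp]
  calc finrank ℝ (Submodule.map (ρ u) (LinearMap.range ((1 - geomRefl M i).comp (ρ u⁻¹))))
      ≤ finrank ℝ (LinearMap.range ((1 - geomRefl M i).comp (ρ u⁻¹))) :=
        Submodule.finrank_map_le _ _
    _ ≤ finrank ℝ (LinearMap.range (1 - geomRefl M i)) :=
        Submodule.finrank_mono (LinearMap.range_comp_le_range _ _)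
    _ ≤ 1 := geomRefl_rank_le M i

lemma step_rank {B W : Type*} [Fintype B] [DecidableEq B] [Group W]
    {M : CoxeterMatrix B} (cs : CoxeterSystem M W)
    (ρ : W →* Module.End ℝ (B → ℝ)) (hρ : IsGeometricRep cs ρ)
    (x : W) {t : W} (ht : cs.IsReflection t) :
    rkOneSub (ρ x) ≤ rkOneSub (ρ (x * t)) + 1 := by
  have hdecomp : (1 : Module.End ℝ (B → ℝ)) - ρ x =
      (1 - ρ (x * t)) + ρ x * (ρ t - 1) := by
    rw [map_mul, mul_sub, mul_one]; abel
  have hsup : LinearMap.range ((1 : Module.End ℝ (B → ℝ)) - ρ x) ≤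
      LinearMap.range (1 - ρ (x * t)) ⊔ LinearMap.range (ρ x * (ρ t - 1)) := by
    rw [hdecomp]
    rintro v ⟨y, rfl⟩
    exact Submodule.add_mem_sup (LinearMap.mem_range_self _ y) (LinearMap.mem_range_self _ y)
  have h2 : finrank ℝ (LinearMap.range (ρ x * (ρ t - 1))) ≤ 1 := by
    have : ρ x * (ρ t - 1) = (ρ x).comp (ρ t - 1) := rfl
    rw [this, LinearMap.range_comp]
    calc finrank ℝ (Submodule.map (ρ x) (LinearMap.range (ρ t - 1)))
        ≤ finrank ℝ (LinearMap.range (ρ t - 1)) := Submodule.finrank_map_le _ _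
      _ = finrank ℝ (LinearMap.range (1 - ρ t)) := by
          rw [show ρ t - 1 = -(1 - ρ t) by noncomm_ring, LinearMap.range_neg]
      _ ≤ 1 := refl_rank_le cs ρ hρ ht
  calc rkOneSub (ρ x)
      ≤ finrank ℝ (LinearMap.range (1 - ρ (x * t)) ⊔ LinearMap.range (ρ x * (ρ t - 1)) :
          Submodule ℝ (B → ℝ)) := Submodule.finrank_mono hsup
    _ ≤ finrank ℝ (LinearMap.range (1 - ρ (x * t))) +
          finrank ℝ (LinearMap.range (ρ x * (ρ t - 1))) :=
        Submodule.finrank_add_le_finrank_add_finrank _ _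
    _ ≤ rkOneSub (ρ (x * t)) + 1 := by unfold rkOneSub; omega


/-- If `w ≤ τ` in the Bruhat order of a finite Coxeter group, then
`ℓ(w) + rk(1 - w) ≤ ℓ(τ) + rk(1 - τ)` in the geometric representation. -/
theorem stmt4 {B W : Type*} [Fintype B] [DecidableEq B] [Group W] [Finite W]
    {M : CoxeterMatrix B} (cs : CoxeterSystem M W)
    (ρ : W →* Module.End ℝ (B → ℝ)) (hρ : IsGeometricRep cs ρ)
    (w τ : W) (h : BruhatLE cs w τ) :
    cs.length w + rkOneSub (ρ w) ≤ cs.length τ + rkOneSub (ρ τ) := by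
  induction h with
  | refl => exact le_refl _
  | @tail b c hwb step ih =>
    obtain ⟨t, ht, rfl, hlen⟩ := step
    have h1 : rkOneSub (ρ b) ≤ rkOneSub (ρ (b * t)) + 1 := step_rank cs ρ hρ b ht
    omega
end

section
/- Let W be a finite Coxeter group and w ∈ W an involution, s a simple reflection. If ℓ(sws) = ℓ(w) and sws is an involution, then sws = w. -/
/-!
Tits' permutation representation replaces the exchange condition: `W` acts on `W × ZMod 2`,
the simple reflection `s` acting by `(t, e) ↦ (s t s, e + [t = s])`. Along a word `ω`, the
`ZMod 2` coordinate of `(t, e)` can only change if `t` occurs in the right inversion sequence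
of `ω`. Evaluating both sides of `π ω = v s` at `(s, 0)`, with `v` a reduced word of `π ω * s`,
shows that a right descent `s` of `π ω` lies in that sequence. For the word `s :: ω` with `ω`
reduced, this forces `s u = u s` whenever `s` is not a right descent of `u = π ω` but is one
of `s u`. For an involution `w`, left and right descents agree, and the theorem follows by
applying this to `u = w` or to `u = s w`.
-/

open CoxeterSystem

namespace CoxeterSystem

variable {B W : Type*} [Group W] {M : CoxeterMatrix B} (cs : CoxeterSystem M W)

local prefix:100 "s " => cs.simple
local prefix:100 "π " => cs.wordProd
local prefix:100 "ris " => cs.rightInvSeq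

open scoped Classical

theorem simple_mul_mul_simple_eq_iff (i : B) (t u : W) :
    s i * t * s i = u ↔ t = s i * u * s i := by
  constructor <;> rintro rfl <;> simp [mul_assoc]

noncomputable def simplePerm (i : B) : Equiv.Perm (W × ZMod 2) :=
  Function.Involutive.toPerm (fun p ↦ (s i * p.1 * s i, p.2 + if p.1 = s i then 1 else 0)) <| by
    rintro ⟨t, e⟩
    have hfix : s i * t * s i = s i ↔ t = s i := by
      rw [simple_mul_mul_simple_eq_iff, simple_mul_simple_cancel_right]
    by_cases ht : t = s i
    · simp [ht, add_assoc, CharTwo.add_self_eq_zero]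
    · dsimp only
      rw [if_neg ht, if_neg (hfix.not.mpr ht)]
      simp [mul_assoc]

theorem simplePerm_apply (i : B) (t : W) (e : ZMod 2) :
    cs.simplePerm i (t, e) = (s i * t * s i, e + if t = s i then 1 else 0) :=
  rfl

theorem conj_simple_mul_simple_eq_iff (i j : B) (t : W) (n : ℕ) :
    (s i * s j) * t * (s i * s j)⁻¹ = s j * (s i * s j) ^ n ↔
      t = s j * (s i * s j) ^ (n + 2) := by
  have hshift : (s i * s j)⁻¹ * (s j * (s i * s j) ^ n * (s i * s j)) =
      s j * (s i * s j) ^ (n + 2) := by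
    rw [pow_succ, pow_succ', mul_inv_rev, inv_simple, inv_simple]
    simp only [mul_assoc]
  rw [mul_inv_eq_iff_eq_mul, ← eq_inv_mul_iff_mul_eq, hshift]

theorem simplePerm_mul_simplePerm_pow_apply (i j : B) (k : ℕ) (t : W) (e : ZMod 2) :
    ((cs.simplePerm i * cs.simplePerm j) ^ k) (t, e) =
      ((s i * s j) ^ k * t * ((s i * s j) ^ k)⁻¹,
        e + ∑ n ∈ Finset.range (2 * k), if t = s j * (s i * s j) ^ n then 1 else 0) := by
  induction k generalizing t e with
  | zero => simp
  | succ k ih =>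
    have hstep : (cs.simplePerm i * cs.simplePerm j) (t, e) =
        ((s i * s j) * t * (s i * s j)⁻¹, e + ((if t = s j * (s i * s j) ^ 0 then 1 else 0)
          + if t = s j * (s i * s j) ^ 1 then 1 else 0)) := by
      have h₁ : s j * t * s j = s i ↔ t = s j * (s i * s j) ^ 1 := by
        rw [pow_one, simple_mul_mul_simple_eq_iff, mul_assoc]
      rw [Equiv.Perm.mul_apply, simplePerm_apply, simplePerm_apply, h₁]
      simp only [pow_zero, mul_one, mul_inv_rev, inv_simple, mul_assoc, add_assoc]
    rw [pow_succ, Equiv.Perm.mul_apply, hstep, ih]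
    simp only [conj_simple_mul_simple_eq_iff]
    refine Prod.ext (by simp only [pow_succ, mul_inv_rev, mul_assoc]) ?_
    rw [mul_add, mul_one, Finset.sum_range_succ', Finset.sum_range_succ']
    simp only [zero_add]
    ring

theorem isLiftable_simplePerm : M.IsLiftable cs.simplePerm := by
  intro i j
  ext1 ⟨t, e⟩
  have hperiodic (n : ℕ) : s j * (s i * s j) ^ (M i j + n) = s j * (s i * s j) ^ n := by
    rw [pow_add, simple_mul_simple_pow, one_mul]
  rw [simplePerm_mul_simplePerm_pow_apply, simple_mul_simple_pow, two_mul, Finset.sum_range_add]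
  -- the `2 * M i j` summands repeat with period `M i j`, so they cancel in pairs
  simp [hperiodic, CharTwo.add_self_eq_zero]

noncomputable def permRep : W →* Equiv.Perm (W × ZMod 2) :=
  cs.lift ⟨cs.simplePerm, cs.isLiftable_simplePerm⟩

theorem permRep_simple (i : B) : cs.permRep (s i) = cs.simplePerm i :=
  cs.lift_apply_simple cs.isLiftable_simplePerm i

theorem permRep_wordProd_apply_of_not_mem {ω : List B} {t : W} (ht : t ∉ ris ω) (e : ZMod 2) :
    cs.permRep (π ω) (t, e) = (π ω * t * (π ω)⁻¹, e) := by
  induction ω with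
  | nil => simp
  | cons i ω ih =>
    simp only [rightInvSeq, List.mem_cons, not_or] at ht
    have hne : π ω * t * (π ω)⁻¹ ≠ s i := by
      rw [Ne, mul_inv_eq_iff_eq_mul, ← eq_inv_mul_iff_mul_eq, ← mul_assoc]
      exact ht.1
    rw [wordProd_cons, map_mul, Equiv.Perm.mul_apply, ih ht.2, permRep_simple, simplePerm_apply,
      if_neg hne]
    simp [mul_assoc]

theorem mem_rightInvSeq_of_isRightDescent {ω : List B} {i : B}
    (h : cs.IsRightDescent (π ω) i) : s i ∈ ris ω := by
  obtain ⟨ω', hω', hω'_eq⟩ := cs.exists_isReduced (π ω * s i)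
  have hnot : s i ∉ ris ω' := fun hmem ↦ by
    have := (cs.isRightInversion_of_mem_rightInvSeq hω' hmem).2
    rw [← hω'_eq, simple_mul_simple_cancel_right] at this
    exact lt_asymm h this
  by_contra hmem
  have hsnd := congrArg Prod.snd (cs.permRep_wordProd_apply_of_not_mem hmem 0)
  rw [show π ω = π ω' * s i by rw [← hω'_eq, simple_mul_simple_cancel_right], map_mul,
    Equiv.Perm.mul_apply, permRep_simple, simplePerm_apply, if_pos rfl,
    simple_mul_simple_self, one_mul, zero_add, permRep_wordProd_apply_of_not_mem _ hnot] at hsnd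
  simp at hsnd

theorem simple_mul_eq_mul_simple_of_isRightDescent_simple_mul {u : W} {i : B}
    (hu : ¬cs.IsRightDescent u i) (hsu : cs.IsRightDescent (s i * u) i) : s i * u = u * s i := by
  obtain ⟨ω, hω, rfl⟩ := cs.exists_isReduced u
  rw [← wordProd_cons] at hsu
  rcases List.mem_cons.mp (cs.mem_rightInvSeq_of_isRightDescent hsu) with heq | hmem
  · conv_rhs => rw [heq]
    group
  · exact absurd (cs.isRightInversion_of_mem_rightInvSeq hω hmem).2 hu

end CoxeterSystem

theorem stmt5_general {B W : Type*} [Group W] {M : CoxeterMatrix B}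
    (cs : CoxeterSystem M W) (w : W) (hw : w * w = 1) (i : B)
    (hlen : cs.length (cs.simple i * w * cs.simple i) = cs.length w) :
    cs.simple i * w * cs.simple i = w := by
  have hdescent : cs.IsLeftDescent w i ↔ cs.IsRightDescent w i := by
    rw [← isRightDescent_inv_iff, inv_eq_of_mul_eq_one_right hw]
  by_cases hr : cs.IsRightDescent w i
  · have hl : cs.length (cs.simple i * w) < cs.length w := hdescent.mpr hr
    have hcomm := cs.simple_mul_eq_mul_simple_of_isRightDescent_simple_mul (u := cs.simple i * w)
      (by rw [IsRightDescent, hlen]; lia) (by rwa [simple_mul_simple_cancel_left])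
    rw [simple_mul_simple_cancel_left] at hcomm
    exact hcomm.symm
  · have hl := cs.not_isLeftDescent_iff.mp (mt hdescent.mp hr)
    have hcomm := cs.simple_mul_eq_mul_simple_of_isRightDescent_simple_mul hr
      (by rw [IsRightDescent, hlen]; lia)
    rw [hcomm, mul_assoc, simple_mul_simple_self, mul_one]

/-- If `w` is an involution, `s` a simple reflection, `ℓ(sws) = ℓ(w)` and `sws` is an
involution, then `sws = w`. -/
theorem stmt5 {B W : Type*} [Group W] [Finite W] {M : CoxeterMatrix B}
    (cs : CoxeterSystem M W) (w : W) (hw : w * w = 1) (i : B)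
    (hlen : cs.length (cs.simple i * w * cs.simple i) = cs.length w)
    (hinv : (cs.simple i * w * cs.simple i) * (cs.simple i * w * cs.simple i) = 1) :
    cs.simple i * w * cs.simple i = w :=
  stmt5_general cs w hw i hlen
end

section
/- Let W be a finite Coxeter group and C a conjugacy class of involutions in W with a unique element σ of maximal length. Suppose that for every w ∈ C there is a chain σ = σ₀, σ₁, …, σ_r = w in C with σ_j = s_{i_j} σ_{j−1} s_{i_j} for simple reflections s_{i_j} and ℓ(σ_j) ≥ ℓ(σ_{j+1}) for all j. Then σ is the maximum of C in the Bruhat order. -/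
open CoxeterSystem

namespace BruhatAux

open List

variable {B W : Type*} [Group W] [DecidableEq W] {M : CoxeterMatrix B} (cs : CoxeterSystem M W)

/-- The sign action of a simple reflection on pairs (element, sign). -/
def etaFun (i : B) : W × ℤˣ → W × ℤˣ :=
  fun p => (cs.simple i * p.1 * cs.simple i, if p.1 = cs.simple i then -p.2 else p.2)

lemma etaFun_involutive (i : B) : Function.Involutive (etaFun cs i) := by
  rintro ⟨t, e⟩
  have hfix : cs.simple i * (cs.simple i * t * cs.simple i) * cs.simple i = t := by
    simp only [← mul_assoc]
    rw [cs.simple_mul_simple_self, one_mul, cs.simple_mul_simple_cancel_right]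
  have h4 : cs.simple i * cs.simple i * cs.simple i = cs.simple i := by
    rw [cs.simple_mul_simple_self, one_mul]
  by_cases h : t = cs.simple i
  · subst h
    simp [etaFun, h4]
  · have h2 : cs.simple i * t * cs.simple i ≠ cs.simple i := by
      intro hc
      apply h
      have h3 := hfix.symm
      rw [hc, h4] at h3
      exact h3
    simp only [etaFun, if_neg h, if_neg h2]
    exact Prod.ext hfix rfl

/-- The sign action as a permutation. -/
def eta (i : B) : Equiv.Perm (W × ℤˣ) := (etaFun_involutive cs i).toPerm

lemma eta_apply (i : B) (t : W) (e : ℤˣ) :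
    eta cs i (t, e) = (cs.simple i * t * cs.simple i,
      if t = cs.simple i then -e else e) := rfl

lemma rightInvSeq_cons (i : B) (ω : List B) :
    cs.rightInvSeq (i :: ω)
      = ((cs.wordProd ω)⁻¹ * cs.simple i * cs.wordProd ω) :: cs.rightInvSeq ω := rfl

lemma prod_map_eta (ω : List B) (t : W) (e : ℤˣ) :
    ((ω.map (eta cs)).prod) (t, e) =
      (cs.wordProd ω * t * (cs.wordProd ω)⁻¹,
        e * (-1) ^ (List.count t (cs.rightInvSeq ω))) := by
  induction ω generalizing e with
  | nil => simp
  | cons i ω ih =>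
    rw [map_cons, prod_cons, Equiv.Perm.mul_apply, ih, eta_apply,
      rightInvSeq_cons, wordProd_cons]
    have hcond : (cs.wordProd ω * t * (cs.wordProd ω)⁻¹ = cs.simple i)
        ↔ (t = (cs.wordProd ω)⁻¹ * cs.simple i * cs.wordProd ω) := by
      constructor
      · intro h; rw [← h]; group
      · intro h; rw [h]; group
    by_cases h : t = (cs.wordProd ω)⁻¹ * cs.simple i * cs.wordProd ω
    · rw [if_pos (hcond.mpr h)]
      have hcount : List.count t
          (((cs.wordProd ω)⁻¹ * cs.simple i * cs.wordProd ω) :: cs.rightInvSeq ω)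
          = List.count t (cs.rightInvSeq ω) + 1 := by
        rw [List.count_cons]
        simp [h]
      rw [hcount]
      refine Prod.ext ?_ ?_
      · show cs.simple i * (cs.wordProd ω * t * (cs.wordProd ω)⁻¹) * cs.simple i
          = cs.simple i * cs.wordProd ω * t * (cs.simple i * cs.wordProd ω)⁻¹
        rw [mul_inv_rev, cs.inv_simple]
        simp only [mul_assoc]
      · show -(e * (-1) ^ List.count t (cs.rightInvSeq ω))
          = e * (-1) ^ (List.count t (cs.rightInvSeq ω) + 1)
        rw [pow_succ, ← mul_assoc, mul_neg_one]
    · rw [if_neg (fun hc => h (hcond.mp hc))]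
      have hcount : List.count t
          (((cs.wordProd ω)⁻¹ * cs.simple i * cs.wordProd ω) :: cs.rightInvSeq ω)
          = List.count t (cs.rightInvSeq ω) := by
        rw [List.count_cons]
        simp only [beq_iff_eq]
        rw [if_neg (fun hc => h hc.symm), add_zero]
      rw [hcount]
      refine Prod.ext ?_ rfl
      show cs.simple i * (cs.wordProd ω * t * (cs.wordProd ω)⁻¹) * cs.simple i
          = cs.simple i * cs.wordProd ω * t * (cs.simple i * cs.wordProd ω)⁻¹
      rw [mul_inv_rev, cs.inv_simple]
      simp only [mul_assoc]

lemma alternatingWord_two_mul_succ (i j : B) (m : ℕ) :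
    alternatingWord i j (2 * (m + 1)) = i :: j :: alternatingWord i j (2 * m) := by
  have h1 : 2 * (m + 1) = (2 * m + 1) + 1 := by ring
  have h2 : ¬ Even (2 * m + 1) := by
    rintro ⟨k, hk⟩; omega
  have h3 : Even (2 * m) := ⟨m, by ring⟩
  rw [h1, alternatingWord_succ', alternatingWord_succ', if_neg h2, if_pos h3]

lemma prod_alternating_map {G : Type*} [Monoid G] (f : B → G) (i j : B) (m : ℕ) :
    ((alternatingWord i j (2 * m)).map f).prod = (f i * f j) ^ m := by
  induction m with
  | zero => simp [alternatingWord]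
  | succ m ih =>
    rw [alternatingWord_two_mul_succ, map_cons, map_cons, prod_cons, prod_cons, ih,
      pow_succ', mul_assoc]

/-- The sequence of reflections of the dihedral subgroup generated by `s i` and `s j`. -/
def uSeq (i j : B) (n : ℕ) : W := cs.simple j * (cs.simple i * cs.simple j) ^ n

lemma uSeq_add (i j : B) (k : ℕ) :
    uSeq cs i j (M i j + k) = uSeq cs i j k := by
  rw [uSeq, uSeq, pow_add, cs.simple_mul_simple_pow, one_mul]

lemma dih_pb (a b : W) (ha : a * a = 1) (hb : b * b = 1) (q : ℕ) :
    b * (a * b) ^ q = ((a * b) ^ q)⁻¹ * b := by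
  have hainv : a⁻¹ = a := inv_eq_of_mul_eq_one_right ha
  have hbinv : b⁻¹ = b := inv_eq_of_mul_eq_one_right hb
  induction q with
  | zero => simp
  | succ q ih =>
    have hstep : b * (a * b) = (a * b)⁻¹ * b := by
      rw [mul_inv_rev, hainv, hbinv, mul_assoc]
    rw [pow_succ, ← mul_assoc, ih, mul_assoc, hstep, ← mul_assoc, ← mul_inv_rev, ← pow_succ', ← pow_succ]

lemma dih_even (a b : W) (ha : a * a = 1) (hb : b * b = 1) (q n : ℕ) (hn : q + q = n) :
    ((a * b) ^ q)⁻¹ * b * (a * b) ^ q = b * (a * b) ^ n := by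
  rw [← dih_pb a b ha hb q, mul_assoc, ← pow_add, hn]

lemma dih_odd (a b : W) (ha : a * a = 1) (hb : b * b = 1) (q n : ℕ) (hn : q + 1 + q = n) :
    (b * (a * b) ^ q)⁻¹ * a * (b * (a * b) ^ q) = b * (a * b) ^ n := by
  have hainv : a⁻¹ = a := inv_eq_of_mul_eq_one_right ha
  have hbinv : b⁻¹ = b := inv_eq_of_mul_eq_one_right hb
  have h1 : (b * (a * b) ^ q)⁻¹ * a * (b * (a * b) ^ q)
      = ((a * b) ^ q)⁻¹ * (b * a * b) * (a * b) ^ q := by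
    rw [mul_inv_rev, hbinv]
    simp only [mul_assoc]
  have h2 : b * a * b = (a * b)⁻¹ * b := by
    rw [mul_inv_rev, hainv, hbinv, mul_assoc]
  rw [h1, h2, ← mul_assoc, ← mul_inv_rev, ← pow_succ', ← dih_pb a b ha hb (q + 1),
    mul_assoc, ← pow_add, hn]

lemma ris_alternatingWord (i j : B) (n : ℕ) :
    cs.rightInvSeq (alternatingWord i j n)
      = ((List.range n).reverse).map (uSeq cs i j) := by
  induction n with
  | zero => simp [alternatingWord]
  | succ n ih =>
    rw [alternatingWord_succ', rightInvSeq_cons, ih]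
    have hrange : (List.range (n + 1)).reverse = n :: (List.range n).reverse := by
      rw [List.range_succ, List.reverse_append]
      simp
    rw [hrange, List.map_cons]
    congr 1
    rw [cs.prod_alternatingWord_eq_mul_pow]
    rcases Nat.even_or_odd n with he | ho
    · obtain ⟨q, hq⟩ := id he
      have hn2 : n / 2 = q := by omega
      simp only [if_pos he, hn2, one_mul]
      rw [uSeq]
      exact dih_even (cs.simple i) (cs.simple j) (cs.simple_mul_simple_self i)
        (cs.simple_mul_simple_self j) q n (by omega)
    · have hno : ¬ Even n := by
        rintro ⟨k, hk⟩
        obtain ⟨q, hq⟩ := ho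
        omega
      obtain ⟨q, hq⟩ := id ho
      have hn2 : n / 2 = q := by omega
      simp only [if_neg hno, hn2]
      rw [uSeq]
      exact dih_odd (cs.simple i) (cs.simple j) (cs.simple_mul_simple_self i)
        (cs.simple_mul_simple_self j) q n (by omega)

lemma count_ris_alternating_even (i j : B) (t : W) :
    Even (List.count t (cs.rightInvSeq (alternatingWord i j (2 * M i j)))) := by
  rw [ris_alternatingWord, List.map_reverse, List.count_reverse]
  rw [two_mul, List.range_add, List.map_append, List.count_append, List.map_map]
  have hfun : (uSeq cs i j ∘ fun x => M i j + x) = uSeq cs i j := by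
    funext k
    exact uSeq_add cs i j k
  rw [hfun]
  exact ⟨_, rfl⟩

lemma eta_liftable : M.IsLiftable (eta cs) := by
  intro i j
  apply Equiv.ext
  rintro ⟨t, e⟩
  have h1 := prod_map_eta cs (alternatingWord i j (2 * M i j)) t e
  rw [prod_alternating_map] at h1
  have hπ : cs.wordProd (alternatingWord i j (2 * M i j)) = 1 := by
    rw [cs.prod_alternatingWord_eq_mul_pow]
    have heven : Even (2 * M i j) := ⟨M i j, by ring⟩
    rw [if_pos heven, one_mul]
    have h2 : 2 * M i j / 2 = M i j := by omega
    rw [h2, cs.simple_mul_simple_pow]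
  have hcount := count_ris_alternating_even cs i j t
  rw [hπ] at h1
  rw [h1, hcount.neg_one_pow]
  simp

/-- The reflection-sign representation. -/
noncomputable def rho : W →* Equiv.Perm (W × ℤˣ) := cs.lift ⟨eta cs, eta_liftable cs⟩

lemma rho_simple (i : B) : rho cs (cs.simple i) = eta cs i :=
  cs.lift_apply_simple (eta_liftable cs) i

lemma rho_wordProd (ω : List B) : rho cs (cs.wordProd ω) = ((ω.map (eta cs)).prod) := by
  induction ω with
  | nil => rw [wordProd_nil, map_one, List.map_nil, prod_nil]
  | cons i ω ih => rw [wordProd_cons, map_mul, ih, List.map_cons, prod_cons, rho_simple]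

lemma rho_apply_exists (w t : W) : ∃ n : ℤˣ, ∀ e : ℤˣ,
    rho cs w (t, e) = (w * t * w⁻¹, e * n) := by
  obtain ⟨ω, _, rfl⟩ := cs.exists_reduced_word' w
  exact ⟨(-1) ^ (List.count t (cs.rightInvSeq ω)), fun e => by
    rw [rho_wordProd, prod_map_eta]⟩

lemma rho_reflection_flip {t : W} (ht : cs.IsReflection t) (e : ℤˣ) :
    rho cs t (t, e) = (t, -e) := by
  obtain ⟨v, i, rfl⟩ := ht
  obtain ⟨n₁, h₁⟩ := rho_apply_exists cs v⁻¹ (v * cs.simple i * v⁻¹)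
  obtain ⟨n₂, h₂⟩ := rho_apply_exists cs v (cs.simple i)
  have hsi : v⁻¹ * (v * cs.simple i * v⁻¹) * v⁻¹⁻¹ = cs.simple i := by group
  have hc1 : ∀ e' : ℤˣ, rho cs v⁻¹ (v * cs.simple i * v⁻¹, e') = (cs.simple i, e' * n₁) := by
    intro e'
    rw [h₁ e', hsi]
  have hc2 : ∀ e' : ℤˣ, rho cs v (cs.simple i, e') = (v * cs.simple i * v⁻¹, e' * n₂) := by
    intro e'
    rw [h₂ e']
  have hid : rho cs v (rho cs v⁻¹ (v * cs.simple i * v⁻¹, e))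
      = (v * cs.simple i * v⁻¹, e) := by
    rw [← Equiv.Perm.mul_apply, ← map_mul, mul_inv_cancel, map_one, Equiv.Perm.one_apply]
  rw [hc1, hc2] at hid
  have hn : n₁ * n₂ = 1 := by
    have h3 : e * n₁ * n₂ = e := (Prod.ext_iff.mp hid).2
    have h4 : e * (n₁ * n₂) = e * 1 := by rw [← mul_assoc, h3, mul_one]
    exact mul_left_cancel h4
  have hstep : rho cs (v * cs.simple i * v⁻¹) (v * cs.simple i * v⁻¹, e)
      = rho cs v (rho cs (cs.simple i) (rho cs v⁻¹ (v * cs.simple i * v⁻¹, e))) := by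
    rw [← Equiv.Perm.mul_apply, ← Equiv.Perm.mul_apply, ← map_mul, ← map_mul]
  rw [hstep, hc1, rho_simple, eta_apply, if_pos rfl]
  rw [show cs.simple i * cs.simple i * cs.simple i = cs.simple i by
    rw [cs.simple_mul_simple_self, one_mul]]
  rw [hc2]
  refine Prod.ext rfl ?_
  show -(e * n₁) * n₂ = -e
  rw [neg_mul, mul_assoc, hn, mul_one]

lemma mem_rightInvSeq_of_descent {ω : List B} (hω : cs.IsReduced ω) {t : W}
    (ht : cs.IsReflection t)
    (h : cs.length (cs.wordProd ω * t) < cs.length (cs.wordProd ω)) :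
    t ∈ cs.rightInvSeq ω := by
  by_contra hmem
  have hcnt : List.count t (cs.rightInvSeq ω) = 0 := List.count_eq_zero.mpr hmem
  obtain ⟨ω', hω'red, hω'⟩ := cs.exists_reduced_word' (cs.wordProd ω * t)
  have hA : rho cs (cs.wordProd ω * t) (t, 1) = (cs.wordProd ω * t * (cs.wordProd ω)⁻¹, -1) := by
    rw [map_mul, Equiv.Perm.mul_apply, rho_reflection_flip cs ht, rho_wordProd, prod_map_eta,
      hcnt, pow_zero, mul_one]
  have hB : rho cs (cs.wordProd ω * t) (t, 1)
      = (cs.wordProd ω' * t * (cs.wordProd ω')⁻¹,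
          (1 : ℤˣ) * (-1) ^ (List.count t (cs.rightInvSeq ω'))) := by
    rw [hω', rho_wordProd, prod_map_eta]
  have hsign : ((1 : ℤˣ) * (-1) ^ (List.count t (cs.rightInvSeq ω')) : ℤˣ) = -1 := by
    have h5 := hA.symm.trans hB
    exact ((Prod.ext_iff.mp h5).2).symm
  rw [one_mul] at hsign
  have hmem' : t ∈ cs.rightInvSeq ω' := by
    by_contra hx
    rw [List.count_eq_zero.mpr hx, pow_zero] at hsign
    exact absurd hsign (by decide)
  have hinv := cs.isRightInversion_of_mem_rightInvSeq hω'red hmem'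
  have h6 : cs.length (cs.wordProd ω' * t) < cs.length (cs.wordProd ω') := hinv.2
  rw [← hω', mul_assoc, ht.mul_self, mul_one] at h6
  omega

lemma exchange_simple {ω : List B} (hω : cs.IsReduced ω) (i : B)
    (h : cs.length (cs.wordProd ω * cs.simple i) < cs.length (cs.wordProd ω)) :
    ∃ k < ω.length, cs.wordProd ω * cs.simple i = cs.wordProd (ω.eraseIdx k) := by
  have hmem := mem_rightInvSeq_of_descent cs hω (cs.isReflection_simple i) h
  obtain ⟨k, hk, hkt⟩ := List.mem_iff_getElem.mp hmem
  rw [cs.length_rightInvSeq] at hk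
  refine ⟨k, hk, ?_⟩
  have hgd : (cs.rightInvSeq ω).getD k 1 = cs.simple i := by
    rw [List.getD_eq_getElem _ 1 (by rw [cs.length_rightInvSeq]; exact hk)]
    exact hkt
  rw [← hgd]
  exact cs.wordProd_mul_getD_rightInvSeq ω k

/-- Key lemma: if both `s i * x < x` and `x * s i < x`, then either `s i` and `x` commute
or conjugation by `s i` lowers the length by 2. -/
lemma lemX (x : W) (i : B) (hl : cs.length (cs.simple i * x) < cs.length x)
    (hr : cs.length (x * cs.simple i) < cs.length x) :
    x * cs.simple i = cs.simple i * x ∨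
      cs.length (cs.simple i * (x * cs.simple i)) < cs.length (cs.simple i * x) := by
  obtain ⟨θ, hθred, hθ⟩ := cs.exists_reduced_word' (cs.simple i * x)
  have hx : x = cs.wordProd (i :: θ) := by
    rw [wordProd_cons, ← hθ, cs.simple_mul_simple_cancel_left]
  have hlen : cs.length (cs.simple i * x) + 1 = cs.length x := by
    rcases cs.length_simple_mul x i with h' | h'
    · omega
    · exact h'
  have hred : cs.IsReduced (i :: θ) := by
    unfold CoxeterSystem.IsReduced
    rw [← hx, List.length_cons]
    unfold CoxeterSystem.IsReduced at hθred
    rw [← hθ] at hθred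
    omega
  have hdesc : cs.length (cs.wordProd (i :: θ) * cs.simple i)
      < cs.length (cs.wordProd (i :: θ)) := by
    rw [← hx]; exact hr
  obtain ⟨k, hk, hke⟩ := exchange_simple cs hred i hdesc
  rw [← hx] at hke
  match k, hk with
  | 0, _ =>
    left
    rw [hke]
    show cs.wordProd θ = cs.simple i * x
    rw [← hθ]
  | (k' + 1), hk =>
    right
    rw [List.length_cons] at hk
    have hk' : k' < θ.length := by omega
    have herase : (i :: θ).eraseIdx (k' + 1) = i :: θ.eraseIdx k' := rfl
    rw [herase, wordProd_cons] at hke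
    have h7 : cs.simple i * (x * cs.simple i) = cs.wordProd (θ.eraseIdx k') := by
      rw [hke, cs.simple_mul_simple_cancel_left]
    have h8 : cs.length (cs.wordProd (θ.eraseIdx k')) ≤ (θ.eraseIdx k').length :=
      cs.length_wordProd_le _
    have h9 : (θ.eraseIdx k').length = θ.length - 1 := by
      rw [List.length_eraseIdx]
      simp [hk']
    have h10 : cs.length (cs.simple i * x) = θ.length := by
      unfold CoxeterSystem.IsReduced at hθred
      rw [← hθ] at hθred
      exact hθred
    rw [h7]
    omega

/-- For an involution `τ`, if conjugation by a simple reflection preserves the length,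
then it fixes `τ`. -/
lemma lemK (τ : W) (hτ : τ * τ = 1) (i : B)
    (h : cs.length (cs.simple i * τ * cs.simple i) = cs.length τ) :
    cs.simple i * τ * cs.simple i = τ := by
  have hτinv : τ⁻¹ = τ := inv_eq_of_mul_eq_one_right hτ
  have hlr : cs.length (τ * cs.simple i) = cs.length (cs.simple i * τ) := by
    rw [← cs.length_inv (τ * cs.simple i), mul_inv_rev, hτinv, cs.inv_simple]
  rcases cs.length_simple_mul τ i with hup | hdown
  · -- ℓ(s i * τ) = ℓ τ + 1 : apply lemX to x = s i * τ
    have hxl : cs.length (cs.simple i * (cs.simple i * τ)) < cs.length (cs.simple i * τ) := by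
      rw [cs.simple_mul_simple_cancel_left]; omega
    have hxr : cs.length ((cs.simple i * τ) * cs.simple i) < cs.length (cs.simple i * τ) := by
      have : (cs.simple i * τ) * cs.simple i = cs.simple i * τ * cs.simple i := rfl
      rw [this, h]; omega
    rcases lemX cs (cs.simple i * τ) i hxl hxr with heq | hlt
    · -- (s i * τ) * s i = s i * (s i * τ) = τ
      show (cs.simple i * τ) * cs.simple i = τ
      rw [heq, cs.simple_mul_simple_cancel_left]
    · exfalso
      have h11 : cs.simple i * ((cs.simple i * τ) * cs.simple i) = τ * cs.simple i := by
        rw [show (cs.simple i * τ) * cs.simple i = cs.simple i * (τ * cs.simple i) by group,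
          cs.simple_mul_simple_cancel_left]
      rw [h11, cs.simple_mul_simple_cancel_left, hlr] at hlt
      omega
  · -- ℓ(s i * τ) + 1 = ℓ τ : apply lemX to x = τ
    have hxl : cs.length (cs.simple i * τ) < cs.length τ := by omega
    have hxr : cs.length (τ * cs.simple i) < cs.length τ := by rw [hlr]; omega
    rcases lemX cs τ i hxl hxr with heq | hlt
    · rw [mul_assoc, heq, cs.simple_mul_simple_cancel_left]
    · exfalso
      have h12 : cs.simple i * (τ * cs.simple i) = cs.simple i * τ * cs.simple i := by group
      rw [h12, h] at hlt
      omega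

/-- The key step: conjugating an involution by a simple reflection, if the length does not
increase, gives something below it in Bruhat order. -/
lemma bruhat_step (τ : W) (hτ : τ * τ = 1) (i : B)
    (h : cs.length (cs.simple i * τ * cs.simple i) ≤ cs.length τ) :
    BruhatLE cs (cs.simple i * τ * cs.simple i) τ := by
  rcases eq_or_lt_of_le h with heq | hlt
  · rw [lemK cs τ hτ i heq]
    exact Relation.ReflTransGen.refl
  · have hτinv : τ⁻¹ = τ := inv_eq_of_mul_eq_one_right hτ
    have hlr : cs.length (τ * cs.simple i) = cs.length (cs.simple i * τ) := by
      rw [← cs.length_inv (τ * cs.simple i), mul_inv_rev, hτinv, cs.inv_simple]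
    have hdown : cs.length (cs.simple i * τ) + 1 = cs.length τ := by
      rcases cs.length_simple_mul τ i with hup | hdown'
      · exfalso
        rcases cs.length_mul_simple (cs.simple i * τ) i with h' | h' <;> omega
      · exact hdown'
    have h2 : cs.length (cs.simple i * τ * cs.simple i) < cs.length (cs.simple i * τ) := by
      rcases cs.length_mul_simple (cs.simple i * τ) i with h' | h' <;> omega
    have e1 : cs.simple i * τ = (cs.simple i * τ * cs.simple i) * cs.simple i := by
      rw [cs.simple_mul_simple_cancel_right]
    have r1 : (fun x y => ∃ t, cs.IsReflection t ∧ y = x * t ∧ cs.length x < cs.length y)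
        (cs.simple i * τ * cs.simple i) (cs.simple i * τ) :=
      ⟨cs.simple i, cs.isReflection_simple i, e1, h2⟩
    have e2 : τ = (cs.simple i * τ) * (τ * cs.simple i * τ⁻¹) := by
      rw [hτinv]
      rw [show (cs.simple i * τ) * (τ * cs.simple i * τ) = cs.simple i * (τ * τ) * (cs.simple i * τ) by group]
      rw [hτ, mul_one, cs.simple_mul_simple_cancel_left]
    have r2 : (fun x y => ∃ t, cs.IsReflection t ∧ y = x * t ∧ cs.length x < cs.length y)
        (cs.simple i * τ) τ :=
      ⟨τ * cs.simple i * τ⁻¹, ⟨τ, i, rfl⟩, e2, by omega⟩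
    exact Relation.ReflTransGen.head r1 (Relation.ReflTransGen.single r2)

end BruhatAux

/-- If `C` is a conjugacy class of involutions with a unique maximal length element `σ`, and
every `w ∈ C` can be reached from `σ` by a chain of conjugations by simple reflections with
non-increasing lengths, then `σ` is the maximum of `C` in the Bruhat order. -/
theorem stmt9 {B W : Type*} [Group W] [Finite W] {M : CoxeterMatrix B}
    (cs : CoxeterSystem M W) (C : Set W)
    (hC : ∃ w, C = {x | IsConj w x}) (hinv : ∀ w ∈ C, w * w = 1)
    (σ : W) (hσ : σ ∈ C)
    (hσmax : ∀ τ ∈ C, cs.length τ ≤ cs.length σ)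
    (hσuniq : ∀ τ ∈ C, cs.length τ = cs.length σ → τ = σ)
    (hchain : ∀ w ∈ C, ∃ (r : ℕ) (f : ℕ → W), f 0 = σ ∧ f r = w ∧
      (∀ j ≤ r, f j ∈ C) ∧
      (∀ j < r, ∃ i : B, f (j + 1) = cs.simple i * f j * cs.simple i) ∧
      (∀ j < r, cs.length (f (j + 1)) ≤ cs.length (f j))) :
    ∀ w ∈ C, BruhatLE cs w σ := by
  letI := Classical.decEq W
  intro w hw
  obtain ⟨r, f, hf0, hfr, hmem, hstep, hlen⟩ := hchain w hw
  suffices H : ∀ j, j ≤ r → BruhatLE cs (f j) σ by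
    rw [← hfr]; exact H r le_rfl
  intro j
  induction j with
  | zero =>
    intro _
    rw [hf0]
    exact Relation.ReflTransGen.refl
  | succ j ih =>
    intro hjr
    have hj : j < r := by omega
    obtain ⟨i, hi⟩ := hstep j hj
    have hble : BruhatLE cs (f (j + 1)) (f j) := by
      rw [hi]
      exact BruhatAux.bruhat_step cs (f j) (hinv _ (hmem j (le_of_lt hj))) i
        (by rw [← hi]; exact hlen j hj)
    exact Relation.ReflTransGen.trans hble (ih (le_of_lt hj))
end
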